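/- Two si-logics L and L' contain the same Jankov formulas (that is, for every finite rooted poset X, 𝒥(X) ∈ L if and only if 𝒥(X) ∈ L') if and only if Fin(L) = Fin(L'). -/

import Mathlib

/-- Intuitionistic propositional formulas over variables `p₀, p₁, …`. -/
inductive IForm : Type
  | var : ℕ → IForm
  | bot : IForm
  | and : IForm → IForm → IForm
  | or : IForm → IForm → IForm
  | imp : IForm → IForm → IForm

namespace IForm

/-- Uniform substitution. -/
def subst (σ : ℕ → IForm) : IForm → IForm
  | var n => σ n
  | bot => bot
  | and φ ψ => and (subst σ φ) (subst σ ψ)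
  | or φ ψ => or (subst σ φ) (subst σ ψ)
  | imp φ ψ => imp (subst σ φ) (subst σ ψ)

/-- Biconditional `φ ↔ ψ`. -/
def biimp (φ ψ : IForm) : IForm := and (imp φ ψ) (imp ψ φ)

end IForm

/-- The theorems of the intuitionistic propositional calculus `IPC`, given by a
standard Hilbert-style axiomatization (all axioms are schemes, so `IPC` is
closed under uniform substitution) together with modus ponens. -/
inductive IPC : IForm → Prop
  | ax1 (φ ψ : IForm) : IPC (φ.imp (ψ.imp φ))
  | ax2 (φ ψ χ : IForm) : IPC ((φ.imp (ψ.imp χ)).imp ((φ.imp ψ).imp (φ.imp χ)))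
  | andE1 (φ ψ : IForm) : IPC ((φ.and ψ).imp φ)
  | andE2 (φ ψ : IForm) : IPC ((φ.and ψ).imp ψ)
  | andI (φ ψ : IForm) : IPC (φ.imp (ψ.imp (φ.and ψ)))
  | orI1 (φ ψ : IForm) : IPC (φ.imp (φ.or ψ))
  | orI2 (φ ψ : IForm) : IPC (ψ.imp (φ.or ψ))
  | orE (φ ψ χ : IForm) : IPC ((φ.imp χ).imp ((ψ.imp χ).imp ((φ.or ψ).imp χ)))
  | exfalso (φ : IForm) : IPC (IForm.bot.imp φ)
  | mp (φ ψ : IForm) : IPC (φ.imp ψ) → IPC φ → IPC ψ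

/-- A superintuitionistic logic: a set of formulas containing `IPC` and closed
under modus ponens and uniform substitution. -/
def SuperIntuitionistic (L : Set IForm) : Prop :=
  (∀ φ, IPC φ → φ ∈ L) ∧
  (∀ φ ψ, φ.imp ψ ∈ L → φ ∈ L → ψ ∈ L) ∧
  (∀ φ (σ : ℕ → IForm), φ ∈ L → φ.subst σ ∈ L)
/-- Kripke forcing on a poset, relative to a valuation by upsets. -/
def Forces {X : Type} [Preorder X] (v : ℕ → Set X) : X → IForm → Prop
  | x, .var n => x ∈ v n
  | _, .bot => False
  | x, .and φ ψ => Forces v x φ ∧ Forces v x ψ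
  | x, .or φ ψ => Forces v x φ ∨ Forces v x ψ
  | x, .imp φ ψ => ∀ y, x ≤ y → Forces v y φ → Forces v y ψ

/-- A formula is valid in a poset if it is forced at every point under every
valuation by upsets. -/
def ValidIn (X : Type) [Preorder X] (φ : IForm) : Prop :=
  ∀ v : ℕ → Set X, (∀ n, IsUpperSet (v n)) → ∀ x : X, Forces v x φ

/-- A poset validates a logic if every formula of the logic is valid in it. -/
def ValidLogic (X : Type) [Preorder X] (L : Set IForm) : Prop :=
  ∀ φ ∈ L, ValidIn X φ

/-- `Fin(L) = Fin(L')`: the two logics are validated by the same finite posets. -/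
def SameFinPosets (L L' : Set IForm) : Prop :=
  ∀ (X : Type) [Fintype X] [PartialOrder X], ValidLogic X L ↔ ValidLogic X L'

/-- The fmp span of a logic: the si-logics validated by the same finite posets. -/
def fmpSpan (L : Set IForm) : Set (Set IForm) :=
  {L' | SuperIntuitionistic L' ∧ SameFinPosets L L'}

/-- The degree of the finite model property of a logic. -/
def degFmp (L : Set IForm) : Cardinal :=
  Cardinal.mk (fmpSpan L)
/-- The upsets of a preorder. -/
abbrev Ups (X : Type) [Preorder X] : Type := {U : Set X // IsUpperSet U}

/-- Intersection of upsets. -/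
def upsInter {X : Type} [Preorder X] (U V : Ups X) : Ups X := ⟨U.1 ∩ V.1, U.2.inter V.2⟩

/-- Union of upsets. -/
def upsUnion {X : Type} [Preorder X] (U V : Ups X) : Ups X := ⟨U.1 ∪ V.1, U.2.union V.2⟩

/-- Heyting implication of upsets: `U → V = {x : ↑x ∩ U ⊆ V}`. -/
def upsHimp {X : Type} [Preorder X] (U V : Ups X) : Ups X :=
  ⟨{x | ∀ y, x ≤ y → y ∈ U.1 → y ∈ V.1}, by
    intro a b hab ha y hby hyU
    exact ha y (le_trans hab hby) hyU⟩

/-- The empty upset. -/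
def upsEmpty {X : Type} [Preorder X] : Ups X := ⟨∅, isUpperSet_empty⟩

/-- Finite conjunction. -/
def bigConj : List IForm → IForm
  | [] => IForm.bot.imp IForm.bot
  | φ :: l => φ.and (bigConj l)

/-- The Jankov formula of a finite rooted poset `X` with root `r`: choosing a
distinct variable `p_U` for each upset `U` of `X`, it is `δ → p_s`, where `δ`
is the conjunction of `p_{U∩V} ↔ p_U ∧ p_V`, `p_{U∪V} ↔ p_U ∨ p_V`,
`p_{U→V} ↔ (p_U → p_V)` over all upsets `U, V`, together with `p_∅ ↔ ⊥`, and
`s = X ∖ {r}` is the second largest element of `Up(X)`. -/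
noncomputable def jankov (X : Type) [Fintype X] [PartialOrder X] (r : X)
    (hr : ∀ x, r ≤ x) : IForm :=
  letI : Fintype (Ups X) := Fintype.ofFinite _
  let e : Ups X ≃ Fin (Fintype.card (Ups X)) := Fintype.equivFin (Ups X)
  let p : Ups X → IForm := fun U => IForm.var (e U).val
  let all : List (Ups X) := (List.finRange (Fintype.card (Ups X))).map e.symm
  let triple : Ups X → Ups X → IForm := fun U V =>
    ((p (upsInter U V)).biimp ((p U).and (p V))).and
      (((p (upsUnion U V)).biimp ((p U).or (p V))).and
        ((p (upsHimp U V)).biimp ((p U).imp (p V))))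
  let δ : IForm :=
    (bigConj (all.map fun U => bigConj (all.map fun V => triple U V))).and
      ((p upsEmpty).biimp IForm.bot)
  let s : Ups X := ⟨Set.univ \ {r}, by
    intro a b hab ha
    simp only [Set.mem_diff, Set.mem_univ, Set.mem_singleton_iff, true_and] at ha ⊢
    intro hb
    exact ha (le_antisymm (hb ▸ hab) (hr a))⟩
  δ.imp (p s)

/-- A formula is a Jankov formula if it is the Jankov formula of some finite
rooted poset. -/
def IsJankovFormula (φ : IForm) : Prop :=
  ∃ (X : Type) (i1 : Fintype X) (i2 : PartialOrder X) (r : X)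
    (hr : ∀ x : X, i2.le r x), φ = @jankov X i1 i2 r hr

/-!
Jankov's lemma: for a finite rooted poset `X` with root `r` and an si-logic `L`, `𝒥(X) ∈ L` iff
`X ⊭ L`. If `X` refutes `φ ∈ L` under a valuation `v`, substitute `p_{v(q)}` for each variable `q`:
under the diagram `δ` every subformula of `φ` becomes provably equivalent to `p_U` for its value
`U ∈ Up(X)`, and the value of `φ` misses `r`, so it lies below `s`. Hence `φ[σ] → (δ → p_s)` is in
`IPC`, and `𝒥(X) ∈ L` by modus ponens. Conversely, the generic valuation `p_U ↦ U` forces `δ` but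
not `p_s` at the root. Since forcing at `x` only depends on `↑x`, a finite poset validates `L` iff
all its (finite, rooted) upsets `↑x` do, so `Fin(L)` is determined by the Jankov formulas in `L`.
-/

inductive Deriv : List IForm → IForm → Prop
  | ax {Γ φ} : IPC φ → Deriv Γ φ
  | hyp {Γ φ} : φ ∈ Γ → Deriv Γ φ
  | mp {Γ φ ψ} : Deriv Γ (φ.imp ψ) → Deriv Γ φ → Deriv Γ ψ

theorem IPC.imp_self (A : IForm) : IPC (A.imp A) :=
  .mp _ _ (.mp _ _ (.ax2 A (A.imp A) A) (.ax1 A (A.imp A))) (.ax1 A A)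

theorem IPC.of_deriv_nil {A : IForm} (h : Deriv [] A) : IPC A := by
  induction h with
  | ax h => exact h
  | hyp h => simp at h
  | mp _ _ ih₁ ih₂ => exact .mp _ _ ih₁ ih₂

namespace Deriv

variable {Γ Δ : List IForm} {A B C D : IForm}

theorem mono (h : Deriv Γ A) (hΓ : Γ ⊆ Δ) : Deriv Δ A := by
  induction h with
  | ax h => exact .ax h
  | hyp h => exact .hyp (hΓ h)
  | mp _ _ ih₁ ih₂ => exact .mp ih₁ ih₂

theorem deduction (h : Deriv (A :: Γ) B) : Deriv Γ (A.imp B) := by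
  induction h with
  | ax h => exact .mp (.ax (.ax1 _ _)) (.ax h)
  | hyp h =>
    rcases List.mem_cons.1 h with rfl | h
    · exact .ax (IPC.imp_self _)
    · exact .mp (.ax (.ax1 _ _)) (.hyp h)
  | mp _ _ ih₁ ih₂ => exact .mp (.mp (.ax (.ax2 _ _ _)) ih₁) ih₂

theorem and_left (h : Deriv Γ (A.and B)) : Deriv Γ A := .mp (.ax (.andE1 _ _)) h

theorem and_right (h : Deriv Γ (A.and B)) : Deriv Γ B := .mp (.ax (.andE2 _ _)) h

theorem and_intro (hA : Deriv Γ A) (hB : Deriv Γ B) : Deriv Γ (A.and B) :=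
  .mp (.mp (.ax (.andI _ _)) hA) hB

theorem of_mem_bigConj {l : List IForm} (hA : A ∈ l) (h : Deriv Γ (bigConj l)) : Deriv Γ A := by
  induction l with
  | nil => simp at hA
  | cons B l ih =>
    rcases List.mem_cons.1 hA with rfl | hA
    · exact h.and_left
    · exact ih hA h.and_right

theorem imp_trans (h₁ : Deriv Γ (A.imp B)) (h₂ : Deriv Γ (B.imp C)) : Deriv Γ (A.imp C) :=
  have hΓ : Γ ⊆ A :: Γ := List.subset_cons_self _ _
  deduction (.mp (h₂.mono hΓ) (.mp (h₁.mono hΓ) (.hyp List.mem_cons_self)))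

theorem biimp_mp (h : Deriv Γ (A.biimp B)) : Deriv Γ (A.imp B) := h.and_left

theorem biimp_mpr (h : Deriv Γ (A.biimp B)) : Deriv Γ (B.imp A) := h.and_right

theorem biimp_intro (h₁ : Deriv Γ (A.imp B)) (h₂ : Deriv Γ (B.imp A)) : Deriv Γ (A.biimp B) :=
  and_intro h₁ h₂

theorem biimp_refl : Deriv Γ (A.biimp A) :=
  biimp_intro (.ax (IPC.imp_self _)) (.ax (IPC.imp_self _))

theorem biimp_symm (h : Deriv Γ (A.biimp B)) : Deriv Γ (B.biimp A) :=
  biimp_intro h.biimp_mpr h.biimp_mp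

theorem biimp_trans (h₁ : Deriv Γ (A.biimp B)) (h₂ : Deriv Γ (B.biimp C)) :
    Deriv Γ (A.biimp C) :=
  biimp_intro (h₁.biimp_mp.imp_trans h₂.biimp_mp) (h₂.biimp_mpr.imp_trans h₁.biimp_mpr)

theorem and_imp_and (h₁ : Deriv Γ (A.imp B)) (h₂ : Deriv Γ (C.imp D)) :
    Deriv Γ ((A.and C).imp (B.and D)) :=
  have hΓ : Γ ⊆ A.and C :: Γ := List.subset_cons_self _ _
  have hAC : Deriv (A.and C :: Γ) (A.and C) := .hyp List.mem_cons_self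
  deduction (and_intro (.mp (h₁.mono hΓ) hAC.and_left) (.mp (h₂.mono hΓ) hAC.and_right))

theorem or_imp_or (h₁ : Deriv Γ (A.imp B)) (h₂ : Deriv Γ (C.imp D)) :
    Deriv Γ ((A.or C).imp (B.or D)) :=
  .mp (.mp (.ax (.orE _ _ _)) (h₁.imp_trans (.ax (.orI1 _ _)))) (h₂.imp_trans (.ax (.orI2 _ _)))

theorem imp_imp_imp (h₁ : Deriv Γ (B.imp A)) (h₂ : Deriv Γ (C.imp D)) :
    Deriv Γ ((A.imp C).imp (B.imp D)) :=
  have hΓ : Γ ⊆ A.imp C :: Γ := List.subset_cons_self _ _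
  deduction (((h₁.mono hΓ).imp_trans (.hyp List.mem_cons_self)).imp_trans (h₂.mono hΓ))

theorem and_congr (h₁ : Deriv Γ (A.biimp B)) (h₂ : Deriv Γ (C.biimp D)) :
    Deriv Γ ((A.and C).biimp (B.and D)) :=
  biimp_intro (and_imp_and h₁.biimp_mp h₂.biimp_mp) (and_imp_and h₁.biimp_mpr h₂.biimp_mpr)

theorem or_congr (h₁ : Deriv Γ (A.biimp B)) (h₂ : Deriv Γ (C.biimp D)) :
    Deriv Γ ((A.or C).biimp (B.or D)) :=
  biimp_intro (or_imp_or h₁.biimp_mp h₂.biimp_mp) (or_imp_or h₁.biimp_mpr h₂.biimp_mpr)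

theorem imp_congr (h₁ : Deriv Γ (A.biimp B)) (h₂ : Deriv Γ (C.biimp D)) :
    Deriv Γ ((A.imp C).biimp (B.imp D)) :=
  biimp_intro (imp_imp_imp h₁.biimp_mpr h₂.biimp_mp) (imp_imp_imp h₁.biimp_mp h₂.biimp_mpr)

end Deriv

theorem SuperIntuitionistic.imp_mem_of_deriv {L : Set IForm} (hL : SuperIntuitionistic L)
    {A B C : IForm} (h : Deriv [A] (B.imp C)) (hB : B ∈ L) : A.imp C ∈ L := by
  have hABC : Deriv [A, B] C := .mp (h.mono (by simp)) (.hyp (by simp))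
  exact hL.2.1 _ _ (hL.1 _ (IPC.of_deriv_nil hABC.deduction.deduction)) hB

section Semantics

variable {X : Type} [Preorder X]

def evalUps (v : ℕ → Ups X) : IForm → Ups X
  | .var n => v n
  | .bot => upsEmpty
  | .and φ ψ => upsInter (evalUps v φ) (evalUps v ψ)
  | .or φ ψ => upsUnion (evalUps v φ) (evalUps v ψ)
  | .imp φ ψ => upsHimp (evalUps v φ) (evalUps v ψ)

theorem forces_iff_mem_evalUps (v : ℕ → Ups X) (φ : IForm) (x : X) :
    Forces (fun n => (v n).1) x φ ↔ x ∈ (evalUps v φ).1 := by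
  induction φ generalizing x with
  | var n => rfl
  | bot => simp [Forces, evalUps, upsEmpty]
  | and φ ψ ih₁ ih₂ => simp [Forces, evalUps, upsInter, ih₁, ih₂]
  | or φ ψ ih₁ ih₂ => simp [Forces, evalUps, upsUnion, ih₁, ih₂]
  | imp φ ψ ih₁ ih₂ => simp only [Forces, evalUps, upsHimp, Set.mem_ofPred_eq, ih₁, ih₂]

theorem forces_biimp_of_evalUps_eq {v : ℕ → Ups X} {A B : IForm}
    (h : evalUps v A = evalUps v B) (x : X) : Forces (fun n => (v n).1) x (A.biimp B) := by
  have hAB : ∀ y, Forces (fun n => (v n).1) y A ↔ Forces (fun n => (v n).1) y B := fun y => by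
    rw [forces_iff_mem_evalUps, forces_iff_mem_evalUps, h]
  exact ⟨fun y _ => (hAB y).1, fun y _ => (hAB y).2⟩

theorem forces_bigConj (v : ℕ → Set X) (x : X) (l : List IForm) :
    Forces v x (bigConj l) ↔ ∀ A ∈ l, Forces v x A := by
  induction l with
  | nil => simp [bigConj, Forces]
  | cons A l ih => simp [bigConj, Forces, ih]

theorem forces_subtype_iff {S : Set X} (hS : IsUpperSet S) (v : ℕ → Set X) (φ : IForm) (y : S) :
    Forces (fun n => Subtype.val ⁻¹' v n) y φ ↔ Forces v y φ := by
  induction φ generalizing y with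
  | var n => rfl
  | bot => rfl
  | and φ ψ ih₁ ih₂ => exact and_congr (ih₁ y) (ih₂ y)
  | or φ ψ ih₁ ih₂ => exact or_congr (ih₁ y) (ih₂ y)
  | imp φ ψ ih₁ ih₂ =>
    constructor
    · intro h z hyz hz
      exact (ih₂ ⟨z, hS hyz y.2⟩).1 (h _ hyz ((ih₁ _).2 hz))
    · intro h z hyz hz
      exact (ih₂ z).2 (h z hyz ((ih₁ z).1 hz))

theorem ValidIn.subtype {S : Set X} (hS : IsUpperSet S) {φ : IForm} (h : ValidIn X φ) :
    ValidIn S φ := by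
  intro u hu y
  have hup : ∀ n, IsUpperSet (Subtype.val '' u n) := by
    rintro n a b hab ⟨z, hz, rfl⟩
    exact ⟨⟨b, hS hab z.2⟩, hu n (show z ≤ ⟨b, _⟩ from hab) hz, rfl⟩
  have hy := (forces_subtype_iff hS _ φ y).2 (h _ hup y)
  simpa only [Set.preimage_image_eq _ Subtype.val_injective] using hy

theorem validLogic_iff_forall_Ici (L : Set IForm) :
    ValidLogic X L ↔ ∀ x : X, ValidLogic (Set.Ici x) L := by
  refine ⟨fun h x φ hφ => (h φ hφ).subtype (isUpperSet_Ici x), fun h φ hφ v hv x => ?_⟩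
  have hx := h x φ hφ (fun n => Subtype.val ⁻¹' v n) (fun n => (hv n).preimage (Subtype.mono_coe _))
    ⟨x, Set.self_mem_Ici⟩
  exact (forces_subtype_iff (isUpperSet_Ici x) v φ _).1 hx

end Semantics

namespace Jankov

def coatom {X : Type} [PartialOrder X] (r : X) (hr : ∀ x, r ≤ x) : Ups X :=
  ⟨Set.univ \ {r}, by
    intro a b hab ha
    simp only [Set.mem_sdiff, Set.mem_univ, Set.mem_singleton_iff, true_and] at ha ⊢
    intro hb
    exact ha (le_antisymm (hb ▸ hab) (hr a))⟩

variable (X : Type) [Fintype X] [PartialOrder X]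

noncomputable def index : Ups X ≃ Fin (@Fintype.card (Ups X) (Fintype.ofFinite _)) :=
  @Fintype.equivFin _ (Fintype.ofFinite _)

noncomputable def var (U : Ups X) : IForm := .var (index X U)

noncomputable def upsList : List (Ups X) :=
  (List.finRange (@Fintype.card (Ups X) (Fintype.ofFinite _))).map (index X).symm

noncomputable def clause (U V : Ups X) : IForm :=
  ((var X (upsInter U V)).biimp ((var X U).and (var X V))).and
    (((var X (upsUnion U V)).biimp ((var X U).or (var X V))).and
      ((var X (upsHimp U V)).biimp ((var X U).imp (var X V))))

/-- The formula `δ`, describing the Heyting algebra `Up(X)`. -/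
noncomputable def diagram : IForm :=
  (bigConj ((upsList X).map fun U => bigConj ((upsList X).map fun V => clause X U V))).and
    ((var X upsEmpty).biimp IForm.bot)

theorem jankov_eq_imp (r : X) (hr : ∀ x, r ≤ x) :
    jankov X r hr = (diagram X).imp (var X (coatom r hr)) := rfl

theorem mem_upsList (U : Ups X) : U ∈ upsList X :=
  List.mem_map.2 ⟨index X U, List.mem_finRange _, (index X).symm_apply_apply U⟩

theorem deriv_clause (U V : Ups X) : Deriv [diagram X] (clause X U V) :=
  (((Deriv.hyp List.mem_cons_self).and_left.of_mem_bigConj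
    (List.mem_map_of_mem (mem_upsList X U))).of_mem_bigConj
      (List.mem_map_of_mem (mem_upsList X V)))

theorem deriv_subst_biimp_var_evalUps (v : ℕ → Ups X) (φ : IForm) :
    Deriv [diagram X] ((φ.subst (var X ∘ v)).biimp (var X (evalUps v φ))) := by
  induction φ with
  | var n => exact .biimp_refl
  | bot => exact (Deriv.hyp List.mem_cons_self).and_right.biimp_symm
  | and φ ψ ih₁ ih₂ =>
    exact (Deriv.and_congr ih₁ ih₂).biimp_trans (deriv_clause X _ _).and_left.biimp_symm
  | or φ ψ ih₁ ih₂ =>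
    exact (Deriv.or_congr ih₁ ih₂).biimp_trans (deriv_clause X _ _).and_right.and_left.biimp_symm
  | imp φ ψ ih₁ ih₂ =>
    exact (Deriv.imp_congr ih₁ ih₂).biimp_trans (deriv_clause X _ _).and_right.and_right.biimp_symm

theorem deriv_var_imp_var {U V : Ups X} (h : U.1 ⊆ V.1) :
    Deriv [diagram X] ((var X U).imp (var X V)) := by
  have hUV : upsUnion U V = V := Subtype.ext (Set.union_eq_right.2 h)
  have hor := (deriv_clause X U V).and_right.and_left.biimp_mpr
  rw [hUV] at hor
  exact (Deriv.ax (.orI1 _ _)).imp_trans hor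

noncomputable def generic (n : ℕ) : Ups X :=
  if h : n < @Fintype.card (Ups X) (Fintype.ofFinite _) then (index X).symm ⟨n, h⟩ else upsEmpty

theorem evalUps_generic_var (U : Ups X) : evalUps (generic X) (var X U) = U := by
  simp [var, evalUps, generic]

theorem forces_generic_diagram (x : X) : Forces (fun n => (generic X n).1) x (diagram X) := by
  refine ⟨(forces_bigConj _ _ _).2 fun A hA => ?_, forces_biimp_of_evalUps_eq ?_ x⟩
  · obtain ⟨U, -, rfl⟩ := List.mem_map.1 hA
    refine (forces_bigConj _ _ _).2 fun B hB => ?_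
    obtain ⟨V, -, rfl⟩ := List.mem_map.1 hB
    refine ⟨?_, ?_, ?_⟩ <;>
      exact forces_biimp_of_evalUps_eq (by simp [evalUps, evalUps_generic_var]) x
  · simp [evalUps, evalUps_generic_var]

theorem not_validIn_jankov (r : X) (hr : ∀ x, r ≤ x) : ¬ ValidIn X (jankov X r hr) := by
  rw [jankov_eq_imp]
  intro h
  have hr_s := h _ (fun n => (generic X n).2) r r le_rfl (forces_generic_diagram X r)
  rw [forces_iff_mem_evalUps, evalUps_generic_var] at hr_s
  exact hr_s.2 rfl

end Jankov

open Jankov in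
theorem SuperIntuitionistic.jankov_mem_iff {L : Set IForm} (hL : SuperIntuitionistic L)
    (X : Type) [Fintype X] [PartialOrder X] (r : X) (hr : ∀ x, r ≤ x) :
    jankov X r hr ∈ L ↔ ¬ ValidLogic X L := by
  refine ⟨fun h hX => not_validIn_jankov X r hr (hX _ h), fun h => ?_⟩
  obtain ⟨φ, hφ, v, hv, x, hx⟩ : ∃ φ ∈ L, ∃ v : ℕ → Set X, (∀ n, IsUpperSet (v n)) ∧
      ∃ x, ¬ Forces v x φ := by
    simpa [ValidLogic, ValidIn] using h
  let u : ℕ → Ups X := fun n => ⟨v n, hv n⟩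
  have hle : (evalUps u φ).1 ⊆ (coatom r hr).1 := fun y hy =>
    ⟨trivial, fun hyr => hx ((forces_iff_mem_evalUps u φ x).2
      ((evalUps u φ).2 (Set.mem_singleton_iff.1 hyr ▸ hr x) hy))⟩
  rw [jankov_eq_imp]
  exact hL.imp_mem_of_deriv
    ((deriv_subst_biimp_var_evalUps X u φ).biimp_mp.imp_trans (deriv_var_imp_var X hle))
    (hL.2.2 φ _ hφ)

/-- **Theorem.** Two si-logics `L` and `L'` contain the same Jankov formulas
iff `Fin(L) = Fin(L')`. -/
theorem same_jankov_iff_sameFinPosets (L L' : Set IForm)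
    (hL : SuperIntuitionistic L) (hL' : SuperIntuitionistic L') :
    (∀ (X : Type) (i1 : Fintype X) (i2 : PartialOrder X) (r : X)
        (hr : ∀ x : X, i2.le r x),
          (@jankov X i1 i2 r hr ∈ L ↔ @jankov X i1 i2 r hr ∈ L')) ↔
      SameFinPosets L L' := by
  constructor
  · intro hJ X _ _
    rw [validLogic_iff_forall_Ici, validLogic_iff_forall_Ici]
    refine forall_congr' fun x => ?_
    have hr : ∀ y : Set.Ici x, ⟨x, Set.self_mem_Ici⟩ ≤ y := fun y => y.2
    have hx := hJ (Set.Ici x) (Fintype.ofFinite _) _ _ hr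
    rwa [hL.jankov_mem_iff, hL'.jankov_mem_iff, not_iff_not] at hx
  · intro hS X _ _ r hr
    rw [hL.jankov_mem_iff, hL'.jankov_mem_iff, hS X]
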